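/- (Proposition 4.7, evaluation form) Let Q = id_V. Then for every k = 1,…,N, every u ∈ ℂ with u, u−1, …, u−k+1 distinct from z_1,…,z_n, and every x ∈ gl_N, the transfer matrix commutes with the diagonal gl_N-action on M: 𝒯_{k,id}(u;z) ∘ (Σ_{i=1}^n x^{(i)}) = (Σ_{i=1}^n x^{(i)}) ∘ 𝒯_{k,id}(u;z). -/

import Mathlib

open scoped TensorProduct

noncomputable section

namespace BetheStatements

attribute [local instance 100] LieRing.ofAssociativeRing

/-- The Lie algebra `gl_N` of complex `N × N` matrices. -/
abbrev gl (N : ℕ) := Matrix (Fin N) (Fin N) ℂ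

/-- The matrix unit `e_{ab} = E_{ab}`. -/
def matE (N : ℕ) (a b : Fin N) : gl N := Matrix.single a b 1

/-- The flip map `P ∈ End(V ⊗ V)`, `P (x ⊗ y) = y ⊗ x`. -/
def Pmat (N : ℕ) : Matrix (Fin N × Fin N) (Fin N × Fin N) ℂ :=
  Matrix.of fun x y => if x.1 = y.2 ∧ x.2 = y.1 then (1 : ℂ) else 0

/-- The rational R-matrix `R(u) = u · id + P ∈ End(V ⊗ V)`. -/
def Rmat (N : ℕ) (u : ℂ) : Matrix (Fin N × Fin N) (Fin N × Fin N) ℂ :=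
  u • (1 : Matrix (Fin N × Fin N) (Fin N × Fin N) ℂ) + Pmat N

/-- The skew-symmetrization projector `A^{(k)} ∈ End(V^{⊗k})`. -/
def Ask (k N : ℕ) : Matrix (Fin k → Fin N) (Fin k → Fin N) ℂ :=
  Matrix.of fun x y => (Nat.factorial k : ℂ)⁻¹ *
    ∑ σ : Equiv.Perm (Fin k), ((Equiv.Perm.sign σ : ℤ) : ℂ) * (if x = y ∘ σ then 1 else 0)

/-- `X^{(p)}`: embedding of an operator on `V` into `End(V^{⊗k})` (acting on tensor factor `p`),
with entries in a (possibly noncommutative) ring `A`; a matrix over `A` indexed by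
`Fin k → Fin N` represents an element of `End(V^{⊗k}) ⊗ A`. -/
def emb1 {A : Type*} [Ring A] {N k : ℕ} (p : Fin k) (X : Matrix (Fin N) (Fin N) A) :
    Matrix (Fin k → Fin N) (Fin k → Fin N) A :=
  Matrix.of fun x y => if ∀ j, j ≠ p → x j = y j then X (x p) (y p) else 0

/-- `X^{(pq)}`: embedding of an operator on `V ⊗ V` into `End(V^{⊗k})`
(acting on the tensor factors `p` and `q`). -/
def emb2 {A : Type*} [Ring A] {N k : ℕ} (p q : Fin k)
    (X : Matrix (Fin N × Fin N) (Fin N × Fin N) A) :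
    Matrix (Fin k → Fin N) (Fin k → Fin N) A :=
  Matrix.of fun x y => if ∀ j, j ≠ p → j ≠ q → x j = y j then X (x p, x q) (y p, y q) else 0

section Modules

variable {N n : ℕ}
variable (M : Fin n → Type*) [∀ i, AddCommGroup (M i)] [∀ i, Module ℂ (M i)]
variable (ρ : ∀ i, gl N →ₗ⁅ℂ⁆ Module.End ℂ (M i))
variable (z : Fin n → ℂ)

/-- `x^{(i)}` : the action of `x ∈ gl_N` on the `i`-th factor of `M = M_1 ⊗ ⋯ ⊗ M_n`. -/
def act (i : Fin n) (x : gl N) : Module.End ℂ (⨂[ℂ] j, M j) :=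
  PiTensorProduct.map (Function.update (fun j => (LinearMap.id : M j →ₗ[ℂ] M j)) i (ρ i x))

/-- `L_i(x) = id + x⁻¹ Σ_{a,b} E_{ab} ⊗ e_{ba}^{(i)}`, as a matrix over `End(M)`. -/
def Lfac (i : Fin n) (x : ℂ) : Matrix (Fin N) (Fin N) (Module.End ℂ (⨂[ℂ] j, M j)) :=
  1 + x⁻¹ • Matrix.of fun a b => act M ρ i (matE N b a)

/-- `T(u;z) = L_n(u - z_n) ⋯ L_1(u - z_1)`:
the Yangian generating matrix acting on the tensor product of evaluation modules
`M_1(z_1) ⊗ ⋯ ⊗ M_n(z_n)`. -/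
def Tmat (u : ℂ) : Matrix (Fin N) (Fin N) (Module.End ℂ (⨂[ℂ] j, M j)) :=
  ((List.finRange n).reverse.map fun i => Lfac M ρ i (u - z i)).prod

/-- The transfer matrix `𝒯_{k,Q}(u;z)` of the XXX-type model:
`tr_{V^{⊗k}} [(Q^{⊗k} ⊗ id) T^{(1)}(u;z) T^{(2)}(u−1;z) ⋯ T^{(k)}(u−k+1;z) (A^{(k)} ⊗ id)]`. -/
def transferT (Q : gl N) (k : ℕ) (u : ℂ) : Module.End ℂ (⨂[ℂ] j, M j) :=
  Matrix.trace
    ((Matrix.of fun (x y : Fin k → Fin N) =>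
        algebraMap ℂ (Module.End ℂ (⨂[ℂ] j, M j)) (∏ r, Q (x r) (y r)))
      * ((List.finRange k).map fun r => emb1 r (Tmat M ρ z (u - ((r : ℕ) : ℂ)))).prod
      * (Ask k N).map (algebraMap ℂ (Module.End ℂ (⨂[ℂ] j, M j))))

end Modules


/-! ### Auxiliary lemmas -/

section Aux

variable {A : Type*} [Ring A] {N k : ℕ}

lemma sum_update_eq (p : Fin k) (x : Fin k → Fin N) (f : (Fin k → Fin N) → A)
    (hf : ∀ z, ¬(∀ j, j ≠ p → x j = z j) → f z = 0) :
    ∑ z, f z = ∑ t, f (Function.update x p t) := by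
  have step : ∀ z : Fin k → Fin N,
      f z = ∑ t, if z = Function.update x p t then f z else 0 := by
    intro z
    by_cases h : ∀ j, j ≠ p → x j = z j
    · have hz : z = Function.update x p (z p) := by
        funext j
        rcases eq_or_ne j p with rfl | hj
        · simp
        · simp [Function.update_of_ne hj, (h j hj).symm]
      have hiff : ∀ t : Fin N, (z = Function.update x p t) ↔ t = z p := by
        intro t
        constructor
        · intro ht; rw [ht]; simp
        · intro ht; rw [ht]; exact hz
      have : (∑ t, if z = Function.update x p t then f z else 0)
          = ∑ t, if t = z p then f z else 0 :=
        Finset.sum_congr rfl fun t _ => if_congr (hiff t) rfl rfl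
      rw [this, Finset.sum_ite_eq']; simp
    · rw [hf z h]
      simp
  rw [Finset.sum_congr rfl fun z _ => step z, Finset.sum_comm]
  refine Finset.sum_congr rfl fun t _ => ?_
  rw [Finset.sum_ite_eq']; simp

lemma emb1_mul (p : Fin k) (X Y : Matrix (Fin N) (Fin N) A) :
    emb1 p X * emb1 p Y = emb1 (k := k) p (X * Y) := by
  ext a b
  rw [Matrix.mul_apply]
  rw [sum_update_eq p a _ (fun z hz => by simp [emb1, hz])]
  by_cases hab : ∀ j, j ≠ p → a j = b j
  · have h1 : ∀ t : Fin N, ∀ j, j ≠ p → a j = Function.update a p t j :=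
      fun t j hj => (Function.update_of_ne hj t a).symm
    have h2 : ∀ t : Fin N, ∀ j, j ≠ p → Function.update a p t j = b j :=
      fun t j hj => by rw [Function.update_of_ne hj]; exact hab j hj
    simp only [emb1, Matrix.of_apply, if_pos (h1 _), if_pos (h2 _), Function.update_self,
      if_pos hab, Matrix.mul_apply]
  · have h2 : ∀ t : Fin N, ¬(∀ j, j ≠ p → Function.update a p t j = b j) := by
      intro t ht
      exact hab fun j hj => by rw [← ht j hj, Function.update_of_ne hj]
    simp only [emb1, Matrix.of_apply, if_neg hab, if_neg (h2 _), mul_zero]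
    simp

lemma emb1_mul_cross {p q : Fin k} (hpq : p ≠ q) (X Y : Matrix (Fin N) (Fin N) A) :
    emb1 p X * emb1 q Y = Matrix.of (fun a b =>
      if ∀ j, j ≠ p → j ≠ q → a j = b j then X (a p) (b p) * Y (a q) (b q) else 0) := by
  ext a b
  rw [Matrix.mul_apply]
  rw [sum_update_eq p a _ (fun z hz => by simp [emb1, hz])]
  have h1 : ∀ t : Fin N, ∀ j, j ≠ p → a j = Function.update a p t j :=
    fun t j hj => (Function.update_of_ne hj t a).symm
  simp only [emb1, Matrix.of_apply, if_pos (h1 _), Function.update_self]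
  have hq : ∀ t : Fin N, Function.update a p t q = a q :=
    fun t => Function.update_of_ne (Ne.symm hpq) t a
  have hcond : ∀ t : Fin N, (∀ j, j ≠ q → Function.update a p t j = b j)
      ↔ (t = b p ∧ ∀ j, j ≠ p → j ≠ q → a j = b j) := by
    intro t
    constructor
    · intro h
      refine ⟨by simpa using h p hpq, fun j hjp hjq => ?_⟩
      rw [← h j hjq, Function.update_of_ne hjp]
    · rintro ⟨rfl, h⟩ j hjq
      rcases eq_or_ne j p with rfl | hjp
      · simp
      · rw [Function.update_of_ne hjp]; exact h j hjp hjq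
  have hterm : ∀ t : Fin N,
      X (a p) t * (if ∀ j, j ≠ q → Function.update a p t j = b j then
        Y (Function.update a p t q) (b q) else 0)
      = if t = b p then (if ∀ j, j ≠ p → j ≠ q → a j = b j then
          X (a p) (b p) * Y (a q) (b q) else 0) else 0 := by
    intro t
    rw [hq t, if_congr (hcond t) rfl rfl]
    by_cases h1t : t = b p
    · subst h1t
      by_cases h2t : ∀ j, j ≠ p → j ≠ q → a j = b j <;> simp [h2t]
    · simp [h1t]
  rw [Finset.sum_congr rfl fun t _ => hterm t, Finset.sum_ite_eq']
  simp

lemma emb1_one (p : Fin k) : emb1 p (1 : Matrix (Fin N) (Fin N) A) = 1 := by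
  ext a b
  simp only [emb1, Matrix.of_apply, Matrix.one_apply]
  by_cases h : ∀ j, j ≠ p → a j = b j
  · by_cases h2 : a p = b p
    · have hab : a = b := funext fun j => by
        rcases eq_or_ne j p with rfl | hj
        · exact h2
        · exact h j hj
      simp [h, h2, hab]
    · have hab : a ≠ b := fun hh => h2 (by rw [hh])
      simp [h, h2, hab]
  · have hab : a ≠ b := fun hh => h (fun j _ => by rw [hh])
    simp [h, hab]

lemma emb1_add (p : Fin k) (X Y : Matrix (Fin N) (Fin N) A) :
    emb1 (k := k) p (X + Y) = emb1 p X + emb1 p Y := by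
  ext a b
  simp only [emb1, Matrix.of_apply, Matrix.add_apply]
  split <;> simp

lemma emb1_smulA (p : Fin k) (c : A) (X : Matrix (Fin N) (Fin N) A) :
    emb1 (k := k) p (c • X) = c • emb1 p X := by
  ext a b
  simp only [emb1, Matrix.of_apply, Matrix.smul_apply]
  split <;> simp

lemma emb1_smul_one (p : Fin k) (c : A) :
    emb1 (k := k) p (c • (1 : Matrix (Fin N) (Fin N) A)) = c • 1 := by
  rw [emb1_smulA, emb1_one]

lemma emb1_map {R : Type*} [Ring R] (p : Fin k) (X : Matrix (Fin N) (Fin N) R)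
    (f : R →+* A) : emb1 (k := k) p (X.map f) = (emb1 p X).map f := by
  ext a b
  simp only [emb1, Matrix.of_apply, Matrix.map_apply]
  split <;> simp

lemma smul_one_diag {m : Type*} [Fintype m] [DecidableEq m] (a : A) :
    a • (1 : Matrix m m A) = Matrix.diagonal fun _ => a := by
  ext i j
  by_cases h : i = j <;> simp [Matrix.one_apply, Matrix.diagonal_apply, h]

lemma smul_one_commute {m : Type*} [Fintype m] [DecidableEq m] (a : A) (B : Matrix m m A)
    (h : ∀ i j, Commute a (B i j)) : Commute (a • (1 : Matrix m m A)) B := by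
  show _ * _ = _ * _
  ext i j
  rw [smul_one_diag]
  simp only [Matrix.diagonal_mul, Matrix.mul_diagonal]
  exact h i j

end Aux

section AskAux

variable {N k : ℕ}

lemma mul_Ask_apply (E : Matrix (Fin k → Fin N) (Fin k → Fin N) ℂ) (a b : Fin k → Fin N) :
    (E * Ask k N) a b = (Nat.factorial k : ℂ)⁻¹ *
      ∑ σ : Equiv.Perm (Fin k), ((Equiv.Perm.sign σ : ℤ) : ℂ) * E a (b ∘ σ) := by
  rw [Matrix.mul_apply]
  simp only [Ask, Matrix.of_apply]
  have step : ∀ z : Fin k → Fin N,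
      E a z * ((Nat.factorial k : ℂ)⁻¹ *
        ∑ σ : Equiv.Perm (Fin k), ((Equiv.Perm.sign σ : ℤ) : ℂ) * (if z = b ∘ σ then 1 else 0))
      = ∑ σ : Equiv.Perm (Fin k), (Nat.factorial k : ℂ)⁻¹ *
          (((Equiv.Perm.sign σ : ℤ) : ℂ) * (if z = b ∘ σ then E a z else 0)) := by
    intro z
    rw [Finset.mul_sum, Finset.mul_sum]
    refine Finset.sum_congr rfl fun σ _ => ?_
    split <;> ring
  rw [Finset.sum_congr rfl fun z _ => step z, Finset.sum_comm, Finset.mul_sum]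
  refine Finset.sum_congr rfl fun σ _ => ?_
  rw [← Finset.mul_sum, ← Finset.mul_sum, Finset.sum_ite_eq']
  simp [mul_assoc]

lemma Ask_mul_apply (E : Matrix (Fin k → Fin N) (Fin k → Fin N) ℂ) (a b : Fin k → Fin N) :
    (Ask k N * E) a b = (Nat.factorial k : ℂ)⁻¹ *
      ∑ σ : Equiv.Perm (Fin k), ((Equiv.Perm.sign σ : ℤ) : ℂ) * E (a ∘ ⇑σ⁻¹) b := by
  rw [Matrix.mul_apply]
  simp only [Ask, Matrix.of_apply]
  have hiff : ∀ (z : Fin k → Fin N) (σ : Equiv.Perm (Fin k)),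
      (a = z ∘ σ) ↔ z = a ∘ ⇑σ⁻¹ := by
    intro z σ
    constructor
    · intro h; funext j
      have := congrFun h (σ⁻¹ j)
      simpa using this.symm
    · intro h; funext j
      rw [h]; simp
  have step : ∀ z : Fin k → Fin N,
      ((Nat.factorial k : ℂ)⁻¹ *
        ∑ σ : Equiv.Perm (Fin k), ((Equiv.Perm.sign σ : ℤ) : ℂ) * (if a = z ∘ σ then 1 else 0))
        * E z b
      = ∑ σ : Equiv.Perm (Fin k), (Nat.factorial k : ℂ)⁻¹ *
          (((Equiv.Perm.sign σ : ℤ) : ℂ) * (if z = a ∘ ⇑σ⁻¹ then E z b else 0)) := by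
    intro z
    rw [Finset.mul_sum, Finset.sum_mul]
    refine Finset.sum_congr rfl fun σ _ => ?_
    rw [if_congr (hiff z σ) rfl rfl]
    split <;> ring
  rw [Finset.sum_congr rfl fun z _ => step z, Finset.sum_comm, Finset.mul_sum]
  refine Finset.sum_congr rfl fun σ _ => ?_
  rw [← Finset.mul_sum, ← Finset.mul_sum, Finset.sum_ite_eq']
  simp [mul_assoc]

lemma D_Ask_comm (x : Matrix (Fin N) (Fin N) ℂ) :
    (∑ p : Fin k, emb1 p x) * Ask k N = Ask k N * (∑ p : Fin k, emb1 p x) := by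
  ext a b
  rw [mul_Ask_apply, Ask_mul_apply]
  congr 1
  refine Finset.sum_congr rfl fun σ _ => ?_
  congr 1
  simp only [Matrix.sum_apply]
  refine Fintype.sum_equiv σ _ _ fun p => ?_
  simp only [emb1, Matrix.of_apply, Function.comp_apply]
  have hiff : (∀ j, j ≠ p → a j = b (σ j)) ↔ (∀ j, j ≠ σ p → a (σ⁻¹ j) = b j) := by
    constructor
    · intro h j hj
      have hne : σ⁻¹ j ≠ p := fun hh => hj (by rw [← hh]; simp)
      simpa using h (σ⁻¹ j) hne
    · intro h j hj
      have hne : σ j ≠ σ p := fun hh => hj (σ.injective hh)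
      simpa using h (σ j) hne
  rw [show σ⁻¹ (σ p) = p from σ.symm_apply_apply p]
  exact if_congr hiff rfl rfl

end AskAux

section EndAux

variable {A : Type*} [Ring A] [Algebra ℂ A] {N k : ℕ}

lemma emb1_cross_commute {p q : Fin k} (hpq : p ≠ q) (X : Matrix (Fin N) (Fin N) ℂ)
    (Y : Matrix (Fin N) (Fin N) A) :
    Commute (emb1 (k := k) p (X.map (algebraMap ℂ A))) (emb1 q Y) := by
  show _ * _ = _ * _
  rw [emb1_mul_cross hpq, emb1_mul_cross (Ne.symm hpq)]
  ext a b
  simp only [Matrix.of_apply, Matrix.map_apply]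
  have hiff : (∀ j, j ≠ q → j ≠ p → a j = b j) ↔ (∀ j, j ≠ p → j ≠ q → a j = b j) :=
    ⟨fun h j h1 h2 => h j h2 h1, fun h j h1 h2 => h j h2 h1⟩
  rw [if_congr hiff rfl rfl]
  split
  · exact Algebra.commutes _ _
  · rfl

lemma trace_mul_smul_one {m : Type*} [Fintype m] [DecidableEq m]
    (W : Matrix m m A) (a : A) : (W * (a • 1)).trace = W.trace * a := by
  rw [smul_one_diag]
  simp [Matrix.trace, Matrix.diag, Matrix.mul_diagonal, Finset.sum_mul]

lemma trace_smul_one_mul {m : Type*} [Fintype m] [DecidableEq m]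
    (W : Matrix m m A) (a : A) : ((a • 1) * W).trace = a * W.trace := by
  rw [smul_one_diag]
  simp [Matrix.trace, Matrix.diag, Matrix.diagonal_mul, Finset.mul_sum]

lemma trace_map_comm {m : Type*} [Fintype m]
    (W : Matrix m m A) (E : Matrix m m ℂ) :
    (W * E.map (algebraMap ℂ A)).trace = (E.map (algebraMap ℂ A) * W).trace := by
  simp only [Matrix.trace, Matrix.diag, Matrix.mul_apply, Matrix.map_apply]
  rw [Finset.sum_comm]
  refine Finset.sum_congr rfl fun p _ => Finset.sum_congr rfl fun q _ => ?_
  exact (Algebra.commutes _ _).symm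

end EndAux

section ModAux

variable {N n : ℕ}
variable (M : Fin n → Type*) [∀ i, AddCommGroup (M i)] [∀ i, Module ℂ (M i)]
variable (ρ : ∀ i, gl N →ₗ⁅ℂ⁆ Module.End ℂ (M i))
variable (z : Fin n → ℂ)

private lemma upd_apply (i : Fin n) (f : Module.End ℂ (M i)) (m : ∀ j, M j) :
    (fun j => (Function.update (fun j => (LinearMap.id : M j →ₗ[ℂ] M j)) i f j) (m j))
      = Function.update m i (f (m i)) := by
  funext j
  rcases eq_or_ne j i with rfl | h
  · simp
  · simp [Function.update_of_ne h]

/-- `actE i f`: the operator `f` on `M i` extended to the tensor product. -/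
def actE (i : Fin n) : Module.End ℂ (M i) →ₗ[ℂ] Module.End ℂ (⨂[ℂ] j, M j) where
  toFun f := PiTensorProduct.map (Function.update (fun j => (LinearMap.id : M j →ₗ[ℂ] M j)) i f)
  map_add' f g := by
    refine PiTensorProduct.ext (MultilinearMap.ext fun m => ?_)
    simp only [LinearMap.compMultilinearMap_apply, LinearMap.add_apply,
      PiTensorProduct.map_tprod]
    rw [upd_apply, upd_apply, upd_apply]
    simp [MultilinearMap.map_update_add]
  map_smul' c f := by
    refine PiTensorProduct.ext (MultilinearMap.ext fun m => ?_)
    simp only [LinearMap.compMultilinearMap_apply, LinearMap.smul_apply, RingHom.id_apply,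
      PiTensorProduct.map_tprod]
    rw [upd_apply, upd_apply]
    simp [MultilinearMap.map_update_smul]

lemma actE_apply (i : Fin n) (f : Module.End ℂ (M i)) :
    actE M i f = PiTensorProduct.map
      (Function.update (fun j => (LinearMap.id : M j →ₗ[ℂ] M j)) i f) := rfl

lemma act_eq (i : Fin n) (x : gl N) : act M ρ i x = actE M i (ρ i x) := rfl

lemma actE_mul (i : Fin n) (f g : Module.End ℂ (M i)) :
    actE M i f * actE M i g = actE M i (f * g) := by
  refine PiTensorProduct.ext (MultilinearMap.ext fun m => ?_)
  simp only [LinearMap.compMultilinearMap_apply, Module.End.mul_apply, actE_apply,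
    PiTensorProduct.map_tprod, upd_apply]
  simp [Function.update_idem]

lemma actE_comm {i j : Fin n} (h : i ≠ j) (f : Module.End ℂ (M i)) (g : Module.End ℂ (M j)) :
    actE M i f * actE M j g = actE M j g * actE M i f := by
  refine PiTensorProduct.ext (MultilinearMap.ext fun m => ?_)
  simp only [LinearMap.compMultilinearMap_apply, Module.End.mul_apply, actE_apply,
    PiTensorProduct.map_tprod, upd_apply]
  simp [Function.update_of_ne h, Function.update_of_ne h.symm, Function.update_comm h]

/-- `act` as a linear map in the Lie algebra variable. -/
def actL (i : Fin n) : gl N →ₗ[ℂ] Module.End ℂ (⨂[ℂ] j, M j) :=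
  (actE M i) ∘ₗ (ρ i).toLinearMap

lemma act_eqL (i : Fin n) (x : gl N) : act M ρ i x = actL M ρ i x := rfl

lemma act_lie (i : Fin n) (x y : gl N) :
    act M ρ i x * act M ρ i y - act M ρ i y * act M ρ i x = act M ρ i ⁅x, y⁆ := by
  rw [act_eq, act_eq, act_eq, actE_mul, actE_mul, ← map_sub, ← Ring.lie_def,
    ← LieHom.map_lie]

lemma act_comm_cross {i j : Fin n} (h : i ≠ j) (x y : gl N) :
    act M ρ i x * act M ρ j y = act M ρ j y * act M ρ i x := by
  rw [act_eq, act_eq]; exact actE_comm M h _ _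

lemma lie_matE (x : gl N) (q p : Fin N) :
    ⁅x, matE N q p⁆ = (∑ r, x r q • matE N r p) - (∑ r, x p r • matE N q r) := by
  rw [Ring.lie_def]
  ext c d
  simp only [Matrix.sub_apply, Matrix.mul_apply, Matrix.sum_apply, Matrix.smul_apply,
    matE, Matrix.single, Matrix.of_apply, smul_eq_mul, mul_ite, ite_mul,
    mul_one, mul_zero, one_mul, zero_mul, ite_and]
  by_cases hqc : q = c <;> by_cases hpd : p = d <;>
    simp [hqc, hpd, Finset.sum_ite_eq, Finset.sum_ite_eq']

/-- The matrix `C_i` whose `(a,b)` entry is `e_{ba}^{(i)}`. -/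
def Cm (i : Fin n) : Matrix (Fin N) (Fin N) (Module.End ℂ (⨂[ℂ] j, M j)) :=
  Matrix.of fun a b => act M ρ i (matE N b a)

lemma key_commute (i : Fin n) (x : gl N) :
    Commute (x.map (algebraMap ℂ (Module.End ℂ (⨂[ℂ] j, M j))) + (act M ρ i x) • 1)
      (Cm M ρ i) := by
  show _ * _ = _ * _
  rw [smul_one_diag, Matrix.add_mul, Matrix.mul_add]
  refine Matrix.ext fun p q => ?_
  simp only [Matrix.add_apply, Matrix.diagonal_mul, Matrix.mul_diagonal, Matrix.mul_apply,
    Matrix.map_apply, Cm, Matrix.of_apply]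
  have halg : ∀ (c : ℂ) (y : Module.End ℂ (⨂[ℂ] j, M j)),
      (algebraMap ℂ _) c * y = c • y := fun c y => (Algebra.smul_def c y).symm
  have halg' : ∀ (c : ℂ) (y : Module.End ℂ (⨂[ℂ] j, M j)),
      y * (algebraMap ℂ _) c = c • y := fun c y => by
    rw [← Algebra.commutes]; exact (Algebra.smul_def c y).symm
  simp only [halg, halg']
  simp only [Matrix.diagonal_apply, ite_mul, mul_ite, zero_mul, mul_zero,
    Finset.sum_ite_eq, Finset.sum_ite_eq', Finset.mem_univ, if_true]
  have h1 := act_lie M ρ i x (matE N q p)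
  rw [lie_matE] at h1
  simp only [act_eqL] at h1
  rw [map_sub, map_sum, map_sum] at h1
  simp only [map_smul] at h1
  simp only [← act_eqL] at h1
  rw [sub_eq_sub_iff_add_eq_add] at h1
  -- h1 : act x * act (matE q p) + ∑ r, x p r • act (matE q r)
  --    = ∑ r, x r q • act (matE r p) + act (matE q p) * act x
  calc (∑ r, x p r • act M ρ i (matE N q r)) + act M ρ i x * act M ρ i (matE N q p)
      = act M ρ i x * act M ρ i (matE N q p) + ∑ r, x p r • act M ρ i (matE N q r) := by
        rw [add_comm]
    _ = (∑ r, x r q • act M ρ i (matE N r p)) + act M ρ i (matE N q p) * act M ρ i x := h1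
    _ = _ := rfl

lemma cross_C_commute {i j : Fin n} (h : j ≠ i) (x : gl N) :
    Commute ((act M ρ j x) • (1 : Matrix (Fin N) (Fin N) (Module.End ℂ (⨂[ℂ] j, M j))))
      (Cm M ρ i) := by
  show _ * _ = _ * _
  refine Matrix.ext fun p q => ?_
  simp only [smul_one_diag, Matrix.diagonal_mul, Matrix.mul_diagonal, Cm, Matrix.of_apply]
  exact act_comm_cross M ρ h x (matE N q p)

lemma comm_Lfac (i : Fin n) (x : gl N) (v : ℂ) :
    Commute (x.map (algebraMap ℂ (Module.End ℂ (⨂[ℂ] j, M j)))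
        + (∑ j, act M ρ j x) • (1 : Matrix (Fin N) (Fin N) _))
      (Lfac M ρ i v) := by
  have hC : Commute (x.map (algebraMap ℂ (Module.End ℂ (⨂[ℂ] j, M j)))
      + (∑ j, act M ρ j x) • (1 : Matrix (Fin N) (Fin N) _)) (Cm M ρ i) := by
    have hsplit : x.map (algebraMap ℂ (Module.End ℂ (⨂[ℂ] j, M j)))
        + (∑ j, act M ρ j x) • (1 : Matrix (Fin N) (Fin N) _)
        = (x.map (algebraMap ℂ _) + (act M ρ i x) • 1)
          + ∑ j ∈ Finset.univ.erase i, (act M ρ j x) • (1 : Matrix (Fin N) (Fin N) _) := by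
      rw [Finset.sum_smul,
        ← Finset.sum_erase_add Finset.univ (fun j => (act M ρ j x) • (1 : Matrix (Fin N) (Fin N) _)) (Finset.mem_univ i)]
      abel
    rw [hsplit]
    refine Commute.add_left (key_commute M ρ i x) ?_
    refine Commute.sum_left _ _ _ fun j hj => ?_
    exact cross_C_commute M ρ (Finset.ne_of_mem_erase hj) x
  have : Lfac M ρ i v = 1 + v⁻¹ • Cm M ρ i := rfl
  rw [this]
  exact (Commute.one_right _).add_right (hC.smul_right v⁻¹)

lemma comm_Tmat (x : gl N) (w : ℂ) :
    Commute (x.map (algebraMap ℂ (Module.End ℂ (⨂[ℂ] j, M j)))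
        + (∑ j, act M ρ j x) • (1 : Matrix (Fin N) (Fin N) _))
      (Tmat M ρ z w) := by
  refine Commute.list_prod_right _ _ fun L hL => ?_
  simp only [List.mem_map] at hL
  obtain ⟨i, -, rfl⟩ := hL
  exact comm_Lfac M ρ i x (w - z i)

end ModAux

/-- Proposition 4.7, evaluation form: for `Q = id`, the transfer matrix commutes
with the diagonal `gl_N`-action on `M`:
`𝒯_{k,id}(u;z) ∘ (Σ_i x^{(i)}) = (Σ_i x^{(i)}) ∘ 𝒯_{k,id}(u;z)`. -/
theorem statement6 {N n : ℕ} (hN : 1 ≤ N)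
    (M : Fin n → Type*) [∀ i, AddCommGroup (M i)] [∀ i, Module ℂ (M i)]
    (ρ : ∀ i, gl N →ₗ⁅ℂ⁆ Module.End ℂ (M i))
    (z : Fin n → ℂ) (hz : Function.Injective z)
    (k : ℕ) (hk1 : 1 ≤ k) (hkN : k ≤ N)
    (u : ℂ) (hu : ∀ i : Fin n, ∀ j : ℕ, j < k → u - (j : ℂ) ≠ z i)
    (x : gl N) :
    transferT M ρ z 1 k u * (∑ i, act M ρ i x)
      = (∑ i, act M ρ i x) * transferT M ρ z 1 k u := by
  classical
  set A := Module.End ℂ (⨂[ℂ] j, M j) with hA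
  set X : A := ∑ i, act M ρ i x with hXdef
  set xA : Matrix (Fin N) (Fin N) A := x.map (algebraMap ℂ A) with hxA
  set P : Matrix (Fin k → Fin N) (Fin k → Fin N) A :=
    ((List.finRange k).map fun r => emb1 r (Tmat M ρ z (u - ((r : ℕ) : ℂ)))).prod with hP
  set Am : Matrix (Fin k → Fin N) (Fin k → Fin N) A :=
    (Ask k N).map (algebraMap ℂ A) with hAm
  set D : Matrix (Fin k → Fin N) (Fin k → Fin N) A := ∑ p : Fin k, emb1 p xA with hD
  -- Step 1: the `Q = 1` prefactor is the identity matrix.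
  have hQ : (Matrix.of fun (a b : Fin k → Fin N) =>
      algebraMap ℂ A (∏ r, (1 : gl N) (a r) (b r))) = 1 := by
    refine Matrix.ext fun a b => ?_
    simp only [Matrix.of_apply, Matrix.one_apply]
    by_cases hab : a = b
    · subst hab
      simp [Matrix.one_apply]
    · have : ∃ r, a r ≠ b r := by
        by_contra hc
        push_neg at hc
        exact hab (funext hc)
      obtain ⟨r0, hr0⟩ := this
      rw [if_neg hab, Finset.prod_eq_zero (Finset.mem_univ r0)
        (by simp [Matrix.one_apply, hr0]), map_zero]
  have hT : transferT M ρ z 1 k u = (P * Am).trace := by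
    rw [transferT, hQ, one_mul]
  -- Step 2: commutation of `D + X • 1` with `P`.
  have hcomm1 : Commute (D + X • 1) P := by
    refine Commute.list_prod_right _ _ fun L hL => ?_
    simp only [List.mem_map] at hL
    obtain ⟨r, -, rfl⟩ := hL
    have hsplit : D + X • 1 = emb1 r (xA + X • 1)
        + ∑ p ∈ Finset.univ.erase r, emb1 p xA := by
      rw [emb1_add, emb1_smul_one, hD,
        ← Finset.sum_erase_add Finset.univ (fun p => emb1 (k := k) p xA) (Finset.mem_univ r)]
      abel
    rw [hsplit]
    refine Commute.add_left ?_ ?_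
    · have h := comm_Tmat M ρ z x (u - ((r : ℕ) : ℂ))
      show _ * _ = _ * _
      rw [emb1_mul, emb1_mul, h.eq]
    · refine Commute.sum_left _ _ _ fun p hp => ?_
      rw [hxA]
      exact emb1_cross_commute (Finset.ne_of_mem_erase hp) x _
  -- Step 3: commutation of `D + X • 1` with `Am`.
  have hDmap : D = (∑ p : Fin k, emb1 p x).map (algebraMap ℂ A) := by
    rw [hD]
    refine Matrix.ext fun a b => ?_
    simp only [Matrix.sum_apply, Matrix.map_apply, map_sum, hxA]
    refine Finset.sum_congr rfl fun p _ => ?_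
    rw [emb1_map p x (algebraMap ℂ A)]
    rfl
  have hcomm2 : Commute (D + X • 1) Am := by
    refine Commute.add_left ?_ ?_
    · show _ * _ = _ * _
      rw [hDmap, hAm, ← Matrix.map_mul, ← Matrix.map_mul, D_Ask_comm]
    · refine smul_one_commute X Am fun i j => ?_
      rw [hAm]
      exact (Algebra.commutes (Ask k N i j) X).symm
  have hcomm : Commute (D + X • 1) (P * Am) := hcomm1.mul_right hcomm2
  -- Step 4: conclude via trace identities.
  rw [hT, ← trace_mul_smul_one (P * Am) X, ← trace_smul_one_mul (P * Am) X]
  have e1 : (P * Am) * (X • 1) = (D + X • 1) * (P * Am) - (P * Am) * D := by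
    rw [hcomm.eq, mul_add, add_sub_cancel_left]
  have e2 : (X • (1 : Matrix (Fin k → Fin N) (Fin k → Fin N) A)) * (P * Am)
      = (D + X • 1) * (P * Am) - D * (P * Am) := by
    rw [add_mul, add_sub_cancel_left]
  rw [e1, e2, Matrix.trace_sub, Matrix.trace_sub]
  have : ((P * Am) * D).trace = (D * (P * Am)).trace := by
    rw [hDmap]
    exact trace_map_comm (P * Am) _
  rw [this]

end BetheStatements
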